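/- arXiv:1906.00752 — 6 statements merged into one kernel-verified Lean document; each statement's English description precedes it below -/
import Mathlib

section
/- If x_1,...,x_n are i.i.d. uniform on {0,...,\ell-1}, then the variance of the Kendall score S equals ((\ell-1)/\ell) * n(n-1)/2 + ((\ell^2-1)/\ell^2) * n(n-1)(n-2)/9. -/
/-!
Prepending a first element `a` to `x` adds `∑ i, sign (a - x i)` to the Kendall score.
Reversing the order of the positions negates the score but fixes every symmetric function of
`x`, so the score has mean zero and is uncorrelated with each such increment. The second moment
therefore grows by the second moment of a sum of `n` i.i.d. terms `sign (a - x i)`, which is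
`n (ℓ - 1) / ℓ + n (n - 1) (ℓ² - 1) / (3 ℓ²)` on average over `a`, and the formula follows
by induction on `n`.
-/

open Finset
open scoped BigOperators

/-- Kendall score S = S⁺ - S⁻ of a finite sequence: S⁺ counts the pairs of positions in which
the earlier element exceeds the later one, S⁻ those in which the earlier element is smaller
(the paper's convention: S(0 1 1 2 0 2 1) = 5 - 11 = -6). -/
def kendallS {n : ℕ} {α : Type*} [LinearOrder α] (x : Fin n → α) : ℤ :=
  ((Finset.univ.filter (fun p : Fin n × Fin n => p.2 < p.1 ∧ x p.1 < x p.2)).card : ℤ) -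
  ((Finset.univ.filter (fun p : Fin n × Fin n => p.2 < p.1 ∧ x p.2 < x p.1)).card : ℤ)

section UniformTuples

variable {α K : Type*} [Fintype α] [Field K] [CharZero K]

theorem Fin.expect_pi_succ {n : ℕ} (F : (Fin (n + 1) → α) → K) :
    𝔼 x, F x = 𝔼 a, 𝔼 x : Fin n → α, F (Fin.cons a x) := by
  rw [← Fintype.expect_equiv (Fin.consEquiv fun _ => α) (fun p => F (Fin.cons p.1 p.2)) F
    (fun _ => rfl), ← expect_product' univ univ (fun a x => F (Fin.cons a x))]
  rfl

variable [Nonempty α]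

theorem expect_sum_apply (n : ℕ) (f : α → K) :
    𝔼 x : Fin n → α, ∑ i, f (x i) = n * 𝔼 a, f a := by
  induction n with
  | zero => simp
  | succ n ih =>
    simp only [Fin.expect_pi_succ, Fin.sum_univ_succ, Fin.cons_zero, Fin.cons_succ,
      expect_add_distrib, ih, Fintype.expect_const]
    push_cast
    ring

theorem expect_sq_sum_apply (n : ℕ) (f : α → K) :
    𝔼 x : Fin n → α, (∑ i, f (x i)) ^ 2
      = n * 𝔼 a, f a ^ 2 + n * (n - 1) * (𝔼 a, f a) ^ 2 := by
  induction n with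
  | zero => simp
  | succ n ih =>
    have expand (a : α) (x : Fin n → α) : (∑ i, f ((Fin.cons a x : Fin (n + 1) → α) i)) ^ 2
        = f a ^ 2 + 2 * f a * ∑ i, f (x i) + (∑ i, f (x i)) ^ 2 := by
      simp only [Fin.sum_univ_succ, Fin.cons_zero, Fin.cons_succ]
      ring
    simp only [Fin.expect_pi_succ, expand, expect_add_distrib, ← mul_expect, ih,
      expect_sum_apply, Fintype.expect_const, ← expect_mul]
    push_cast
    ring

end UniformTuples

section OrderSign

variable {α : Type*} [LinearOrder α]

/-- `sign (a - b)`, for an order without subtraction. -/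
def orderSign (a b : α) : ℚ := (if b < a then 1 else 0) - (if a < b then 1 else 0)

theorem orderSign_sq (a b : α) : orderSign a b ^ 2 = if a = b then 0 else 1 := by
  rcases lt_trichotomy a b with h | rfl | h
  · simp [orderSign, h, h.not_gt, h.ne]
  · simp [orderSign]
  · simp [orderSign, h, h.not_gt, h.ne']

theorem sum_orderSign_sq [Fintype α] (a : α) :
    ∑ b, orderSign a b ^ 2 = Fintype.card α - 1 := by
  have : 1 ≤ Fintype.card α := Fintype.card_pos_iff.2 ⟨a⟩
  simp [orderSign_sq, sum_ite, filter_ne, Nat.cast_sub this]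

theorem expect_orderSign_sq [Fintype α] (a : α) :
    𝔼 b, orderSign a b ^ 2 = (Fintype.card α - 1) / Fintype.card α := by
  rw [Fintype.expect_eq_sum_div_card, sum_orderSign_sq]

end OrderSign

theorem sum_orderSign_fin {ℓ : ℕ} (a : Fin ℓ) : ∑ b, orderSign a b = 2 * a + 1 - ℓ := by
  simp only [orderSign, sum_sub_distrib, sum_boole, filter_lt_eq_Ioi, filter_gt_eq_Iio,
    Fin.card_Ioi, Fin.card_Iio]
  have := a.2
  push_cast [Nat.cast_sub (by omega : (a : ℕ) ≤ ℓ - 1), Nat.cast_sub (by omega : 1 ≤ ℓ)]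
  ring

theorem sum_range_sq_two_mul_add (m : ℕ) (c : ℚ) :
    ∑ i ∈ range m, (2 * i + c) ^ 2
      = m * c ^ 2 + 2 * c * m * (m - 1) + 2 * m * (m - 1) * (2 * m - 1) / 3 := by
  induction m with
  | zero => simp
  | succ m ih =>
    rw [sum_range_succ, ih]
    push_cast
    ring

theorem sum_sq_sum_orderSign_fin (ℓ : ℕ) :
    ∑ a : Fin ℓ, (∑ b, orderSign a b) ^ 2 = ℓ * (ℓ ^ 2 - 1) / 3 := by
  simp only [sum_orderSign_fin]
  rw [Fin.sum_univ_eq_sum_range (fun i : ℕ => (2 * (i : ℚ) + 1 - ℓ) ^ 2)]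
  simp only [add_sub_assoc, sum_range_sq_two_mul_add]
  ring

theorem expect_sq_expect_orderSign_fin (ℓ : ℕ) [NeZero ℓ] :
    𝔼 a : Fin ℓ, (𝔼 b, orderSign a b) ^ 2 = (ℓ ^ 2 - 1) / (3 * ℓ ^ 2) := by
  simp only [Fintype.expect_eq_sum_div_card, Fintype.card_fin, div_pow, ← sum_div,
    sum_sq_sum_orderSign_fin]
  field_simp

section KendallScore

variable {α : Type*} [LinearOrder α]

theorem kendallS_eq_sum {n : ℕ} (x : Fin n → α) :
    (kendallS x : ℚ)
      = ∑ p : Fin n × Fin n, if p.2 < p.1 then orderSign (x p.2) (x p.1) else 0 := by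
  unfold kendallS orderSign
  push_cast [card_filter, ← sum_sub_distrib]
  refine sum_congr rfl fun p _ => ?_
  split_ifs <;> simp_all

theorem kendallS_cons {n : ℕ} (a : α) (x : Fin n → α) :
    (kendallS (Fin.cons a x : Fin (n + 1) → α) : ℚ)
      = kendallS x + ∑ i, orderSign a (x i) := by
  simp only [kendallS_eq_sum, Fintype.sum_prod_type, Fin.sum_univ_succ, Fin.cons_zero,
    Fin.cons_succ, Fin.not_lt_zero, Fin.succ_lt_succ_iff, Fin.succ_pos, if_true, if_false,
    sum_const_zero, zero_add, sum_add_distrib]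
  ring

theorem kendallS_comp_rev {n : ℕ} (x : Fin n → α) :
    kendallS (x ∘ Fin.rev) = -kendallS x := by
  have reflect (r : α → α → Prop) [DecidableRel r] :
      #{p : Fin n × Fin n | p.2 < p.1 ∧ r (x p.1.rev) (x p.2.rev)}
        = #{p : Fin n × Fin n | p.2 < p.1 ∧ r (x p.2) (x p.1)} :=
    card_equiv ((Equiv.prodComm _ _).trans (Fin.revPerm.prodCongr Fin.revPerm))
      (by simp [Fin.rev_lt_rev])
  simp only [kendallS, Function.comp_apply, reflect (· < ·), reflect (· > ·)]
  ring

variable [Fintype α]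

theorem expect_kendallS_mul_eq_zero {n : ℕ} (G : (Fin n → α) → ℚ)
    (hG : ∀ x, G (x ∘ Fin.rev) = G x) : 𝔼 x, (kendallS x : ℚ) * G x = 0 := by
  have hrev : Function.Involutive fun x : Fin n → α => x ∘ Fin.rev := fun x => by
    ext i
    simp
  have := Fintype.expect_equiv hrev.toPerm _ (fun x => (kendallS x : ℚ) * G x) fun _ => rfl
  simp only [Function.Involutive.coe_toPerm, kendallS_comp_rev, hG, Int.cast_neg, neg_mul,
    expect_neg_distrib] at this
  linarith

theorem expect_kendallS (n : ℕ) : 𝔼 x : Fin n → α, (kendallS x : ℚ) = 0 := by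
  simpa using expect_kendallS_mul_eq_zero (fun _ => 1) fun _ => rfl

end KendallScore

theorem expect_kendallS_sq {ℓ : ℕ} [NeZero ℓ] (n : ℕ) :
    𝔼 x : Fin n → Fin ℓ, (kendallS x : ℚ) ^ 2
      = ((ℓ : ℚ) - 1) / ℓ * (n * (n - 1) / 2)
        + ((ℓ : ℚ) ^ 2 - 1) / ℓ ^ 2 * (n * (n - 1) * (n - 2) / 9) := by
  induction n with
  | zero => simp [kendallS]
  | succ n ih =>
    have cross (a : Fin ℓ) :
        𝔼 x : Fin n → Fin ℓ, (kendallS x : ℚ) * ∑ i, orderSign a (x i) = 0 :=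
      expect_kendallS_mul_eq_zero _ fun x => Fintype.sum_equiv Fin.revPerm _ _ fun _ => rfl
    have expand (a : Fin ℓ) (x : Fin n → Fin ℓ) :
        (kendallS (Fin.cons a x : Fin (n + 1) → Fin ℓ) : ℚ) ^ 2
          = (kendallS x : ℚ) ^ 2 + 2 * ((kendallS x : ℚ) * ∑ i, orderSign a (x i))
            + (∑ i, orderSign a (x i)) ^ 2 := by
      rw [kendallS_cons]
      ring
    simp only [Fin.expect_pi_succ, expand, expect_add_distrib, ← mul_expect, cross,
      expect_sq_sum_apply, ih, expect_orderSign_sq, expect_sq_expect_orderSign_fin,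
      Fintype.expect_const, expect_const_zero, Fintype.card_fin]
    field_simp
    push_cast
    ring

/-- Variance of S for i.i.d. uniform digits on {0,…,ℓ-1}. -/
theorem kendall_variance (n ℓ : ℕ) (hℓ : 0 < ℓ) :
    (∑ x : Fin n → Fin ℓ, (kendallS x : ℚ) ^ 2) / (ℓ : ℚ) ^ n
      - ((∑ x : Fin n → Fin ℓ, (kendallS x : ℚ)) / (ℓ : ℚ) ^ n) ^ 2
    = ((ℓ : ℚ) - 1) / ℓ * ((n : ℚ) * ((n : ℚ) - 1) / 2)
      + ((ℓ : ℚ) ^ 2 - 1) / (ℓ : ℚ) ^ 2 * ((n : ℚ) * ((n : ℚ) - 1) * ((n : ℚ) - 2) / 9) := by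
  have : NeZero ℓ := ⟨hℓ.ne'⟩
  have average (F : (Fin n → Fin ℓ) → ℚ) : (∑ x, F x) / (ℓ : ℚ) ^ n = 𝔼 x, F x := by
    simp [Fintype.expect_eq_sum_div_card]
  rw [average, average, expect_kendallS_sq, expect_kendallS]
  ring
end

section
/- For the uniform binary case with n = 2\nu + 1 odd, the characteristic function of S is \phi(\theta) = \prod_{k=1}^{\nu} \cos^2(k\theta). -/
/-!
For a 0/1 sequence every pair of positions `i < j` contributes `x i - x j` to `S`, so `S` is
linear in the flips: `S = ∑ i, x i * (n - 1 - 2 i)`. Hence `φ` factors over the independent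
flips as `∏ i, (1 + e^{iθ(2ν - 2i)}) / 2`, and the factors `i` and `2ν - i` multiply to
`cos² ((ν - i)θ)`.
-/

open Finset

theorem kendallS_eq_sum_pairs {n : ℕ} {α : Type*} [LinearOrder α] (x : Fin n → α) :
    kendallS x = ∑ p ∈ univ.filter (fun p : Fin n × Fin n => p.2 < p.1),
      ((if x p.1 < x p.2 then 1 else 0) - (if x p.2 < x p.1 then 1 else 0) : ℤ) := by
  simp only [kendallS, sum_sub_distrib, sum_boole, filter_filter]

theorem sum_pairs_sub_eq_sum_mul {R : Type*} [CommRing R] {n : ℕ} (f : Fin n → R) :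
    ∑ p ∈ univ.filter (fun p : Fin n × Fin n => p.2 < p.1), (f p.2 - f p.1)
      = ∑ i, f i * ((n : R) - 1 - 2 * i) := by
  have later (i : Fin n) : ∑ j, (if i < j then f i else 0) = f i * ((n : R) - 1 - i) := by
    have := i.isLt
    rw [← sum_filter, sum_const, nsmul_eq_mul, filter_lt_eq_Ioi, Fin.card_Ioi, mul_comm,
      Nat.cast_sub (by omega), Nat.cast_sub (by omega), Nat.cast_one]
  have earlier (j : Fin n) : ∑ i, (if i < j then f j else 0) = f j * (j : R) := by
    rw [← sum_filter, sum_const, nsmul_eq_mul, filter_gt_eq_Iio, Fin.card_Iio, mul_comm]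
  rw [sum_sub_distrib, sum_filter, sum_filter, Fintype.sum_prod_type, Fintype.sum_prod_type,
    sum_comm]
  simp only [later, earlier, ← sum_sub_distrib]
  congr! 1 with i
  ring

theorem kendallS_fin_two_eq_sum {n : ℕ} (x : Fin n → Fin 2) :
    kendallS x = ∑ i, (x i : ℤ) * ((n : ℤ) - 1 - 2 * i) := by
  have sign_eq_sub : ∀ a b : Fin 2,
      ((if a < b then 1 else 0) - (if b < a then 1 else 0) : ℤ) = (b : ℤ) - a := by decide
  rw [kendallS_eq_sum_pairs, ← sum_pairs_sub_eq_sum_mul]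
  exact sum_congr rfl fun p _ => sign_eq_sub _ _

theorem sum_fin_two_exp_sum_mul (n : ℕ) (z : Fin n → ℂ) :
    ∑ x : Fin n → Fin 2, Complex.exp (∑ i, (x i : ℂ) * z i)
      = ∏ i, (1 + Complex.exp (z i)) := by
  calc ∑ x : Fin n → Fin 2, Complex.exp (∑ i, (x i : ℂ) * z i)
      = ∑ x : Fin n → Fin 2, ∏ i, Complex.exp ((x i : ℂ) * z i) := by
        simp only [Complex.exp_sum]
    _ = ∏ i, ∑ b : Fin 2, Complex.exp ((b : ℂ) * z i) :=
      (Fintype.prod_sum fun i (b : Fin 2) => Complex.exp ((b : ℂ) * z i)).symm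
    _ = ∏ i, (1 + Complex.exp (z i)) := by simp

theorem prod_range_sub_eq_mul_prod_Icc {M : Type*} [CommMonoid M] (f : ℤ → M) (ν : ℕ) :
    ∏ i ∈ range (2 * ν + 1), f (ν - i) = f 0 * ∏ k ∈ Icc 1 ν, (f k * f (-k)) := by
  induction ν with
  | zero => simp
  | succ ν ih =>
    rw [show 2 * (ν + 1) + 1 = 2 * ν + 1 + 1 + 1 by ring, prod_range_succ, prod_range_succ',
      prod_Icc_succ_top (by omega)]
    push_cast
    simp only [add_sub_add_right_eq_sub, ih, sub_zero,
      show (ν : ℤ) + 1 - (2 * ν + 2) = -(ν + 1) by ring]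
    ac_rfl

theorem cos_sq_eq_mul_half_one_add_exp (w : ℂ) :
    Complex.cos w ^ 2
      = (1 + Complex.exp (2 * w * Complex.I)) / 2
        * ((1 + Complex.exp (2 * -w * Complex.I)) / 2) := by
  have h : Complex.exp (2 * w * Complex.I) * Complex.exp (2 * -w * Complex.I) = 1 := by
    rw [← Complex.exp_add, ← Complex.exp_zero]
    ring_nf
  rw [Complex.cos_sq, Complex.cos, show -(2 * w) * Complex.I = 2 * -w * Complex.I by ring]
  linear_combination -h / 4

/-- Characteristic function of S for n = 2ν+1 fair coin flips: φ(θ) = ∏ₖ cos²(kθ). -/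
theorem kendall_char_odd (ν : ℕ) (θ : ℝ) :
    ∑ j : Fin (2 * ν + 1) → Fin 2,
        (1 / 2 ^ (2 * ν + 1) : ℂ) * Complex.exp ((θ : ℂ) * Complex.I * (kendallS j : ℂ))
      = ∏ k ∈ Finset.Icc 1 ν, Complex.cos ((k : ℂ) * (θ : ℂ)) ^ 2 := by
  set f : ℤ → ℂ := fun k => (1 + Complex.exp (2 * (k * θ) * Complex.I)) / 2 with hf
  have hS (x : Fin (2 * ν + 1) → Fin 2) : (θ : ℂ) * Complex.I * (kendallS x : ℂ)
      = ∑ i, (x i : ℂ) * (2 * (((ν - i : ℤ) : ℂ) * θ) * Complex.I) := by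
    rw [kendallS_fin_two_eq_sum]
    push_cast
    rw [mul_sum]
    exact sum_congr rfl fun i _ => by ring
  calc _ = (1 / 2 ^ (2 * ν + 1) : ℂ) * ∏ i : Fin (2 * ν + 1),
          (1 + Complex.exp (2 * (((ν - i : ℤ) : ℂ) * θ) * Complex.I)) := by
        simp only [hS, ← mul_sum, sum_fin_two_exp_sum_mul]
    _ = ∏ i ∈ range (2 * ν + 1), f (ν - i) := by
        rw [Fin.prod_univ_eq_prod_range
            (fun i => 1 + Complex.exp (2 * (((ν - i : ℤ) : ℂ) * θ) * Complex.I)),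
          prod_div_distrib]
        simp [div_eq_inv_mul]
    _ = ∏ k ∈ Icc 1 ν, Complex.cos ((k : ℂ) * θ) ^ 2 := by
        have hf0 : f 0 = 1 := by norm_num [hf]
        rw [prod_range_sub_eq_mul_prod_Icc, hf0, one_mul]
        refine prod_congr rfl fun k _ => ?_
        simp only [hf, Int.cast_neg, Int.cast_natCast, neg_mul]
        exact (cos_sq_eq_mul_half_one_add_exp _).symm
end

section
/- For the uniform binary case with n = 2\nu even, the characteristic function of S is \phi(\theta) = \prod_{k=1}^{\nu} \cos^2((2k-1)\theta/2). -/
/-!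
For a binary sequence the Kendall score is `S = ∑_{j<i} (x_j - x_i)`, which in terms of the
independent uniform signs `ε_i = 2 x_i - 1` reads `2 S = ∑_i (n - 1 - 2 i) ε_i`. Hence `φ`
factorizes into `∏_i cos ((n - 1 - 2 i) θ / 2)`; for `n = 2ν` the weights `n - 1 - 2 i` are
`±1, ±3, …, ±(2ν - 1)`, and cosine is even.
-/

open Finset

theorem Fin.sum_sum_Iio_sub {R : Type*} [CommRing R] {n : ℕ} (y : Fin n → R) :
    ∑ i : Fin n, ∑ j ∈ Iio i, (y j - y i) = ∑ i : Fin n, ((n : R) - 1 - 2 * (i : ℕ)) * y i := by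
  have earlier : ∑ i : Fin n, ∑ j ∈ Iio i, y j = ∑ j : Fin n, ((n : R) - 1 - (j : ℕ)) * y j := by
    rw [sum_comm' (t' := univ) (s' := Ioi) (by simp)]
    refine sum_congr rfl fun j _ => ?_
    rw [Finset.sum_const, Fin.card_Ioi, nsmul_eq_mul, Nat.sub_sub, Nat.cast_sub (by omega)]
    push_cast; ring
  have later : ∑ i : Fin n, ∑ j ∈ Iio i, y i = ∑ i : Fin n, ((i : ℕ) : R) * y i := by
    simp [Fin.card_Iio]
  simp only [Finset.sum_sub_distrib]
  rw [earlier, later, ← Finset.sum_sub_distrib]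
  exact sum_congr rfl fun i _ => by ring

theorem kendallS_fin_two {n : ℕ} (x : Fin n → Fin 2) :
    kendallS x = ∑ i : Fin n, ∑ j ∈ Iio i, ((x j : ℤ) - x i) := by
  have sign_fin_two : ∀ a b : Fin 2,
      ((if a < b then 1 else 0) - (if b < a then 1 else 0) : ℤ) = (b : ℤ) - a := by decide
  simp only [kendallS, card_filter, Nat.cast_sum, Nat.cast_ite, Nat.cast_one, Nat.cast_zero,
    ← sum_sub_distrib, Fintype.sum_prod_type]
  refine sum_congr rfl fun i _ => ?_
  rw [← Finset.filter_gt_eq_Iio, sum_filter]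
  refine sum_congr rfl fun j _ => ?_
  by_cases hji : j < i <;> simp [hji, sign_fin_two]

theorem two_mul_kendallS_fin_two {n : ℕ} (x : Fin n → Fin 2) :
    2 * kendallS x = ∑ i : Fin n, ((n : ℤ) - 1 - 2 * (i : ℕ)) * (2 * (x i : ℕ) - 1) := by
  rw [kendallS_fin_two, mul_sum, ← Fin.sum_sum_Iio_sub]
  refine sum_congr rfl fun i _ => ?_
  rw [mul_sum]
  exact sum_congr rfl fun j _ => by ring

theorem Complex.sum_fin_two_half_exp_eq_cos (w : ℂ) :
    ∑ v : Fin 2, (1 / 2 : ℂ) * Complex.exp (Complex.I * (w * (2 * (v : ℕ) - 1))) =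
      Complex.cos w := by
  simp only [Fin.sum_univ_two, Fin.val_zero, Fin.val_one, Nat.cast_zero, Nat.cast_one,
    Complex.cos]
  ring_nf

theorem sum_pi_fin_two_exp_eq_prod_cos {ι : Type*} [Fintype ι] [DecidableEq ι] (w : ι → ℂ) :
    ∑ x : ι → Fin 2, (1 / 2 ^ Fintype.card ι : ℂ) *
        Complex.exp (Complex.I * ∑ i, w i * (2 * (x i : ℕ) - 1)) =
      ∏ i, Complex.cos (w i) := by
  simp_rw [← Complex.sum_fin_two_half_exp_eq_cos]
  rw [Fintype.prod_sum]
  refine sum_congr rfl fun x _ => ?_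
  rw [prod_mul_distrib, prod_const, card_univ, one_div_pow, mul_sum, Complex.exp_sum]

theorem prod_range_odd_eq_prod_Icc_sq_of_even {M : Type*} [CommMonoid M] (f : ℤ → M)
    (hf : ∀ z, f (-z) = f z) (ν : ℕ) :
    ∏ i ∈ range (2 * ν), f (2 * ν - 1 - 2 * i) = ∏ k ∈ Icc 1 ν, f (2 * k - 1) ^ 2 := by
  have lower : ∏ i ∈ range ν, f (2 * ν - 1 - 2 * i) = ∏ i ∈ range ν, f (2 * i + 1) := by
    rw [← prod_range_reflect]
    refine prod_congr rfl fun i hi => ?_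
    rw [Nat.sub_sub, Nat.cast_sub (by simp at hi; omega)]
    push_cast; ring_nf
  have upper : ∏ i ∈ range ν, f (2 * ν - 1 - 2 * ↑(ν + i)) = ∏ i ∈ range ν, f (2 * i + 1) := by
    refine prod_congr rfl fun i _ => ?_
    rw [← hf]; push_cast; ring_nf
  rw [two_mul, prod_range_add, lower, upper, ← sq, ← prod_pow,
    ← Ico_add_one_right_eq_Icc, prod_Ico_eq_prod_range, Nat.add_sub_cancel]
  refine prod_congr rfl fun i _ => ?_
  push_cast; ring_nf

/-- Characteristic function of S for n = 2ν fair coin flips: φ(θ) = ∏ₖ cos²((2k-1)θ/2). -/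
theorem kendall_char_even (ν : ℕ) (θ : ℝ) :
    ∑ j : Fin (2 * ν) → Fin 2,
        (1 / 2 ^ (2 * ν) : ℂ) * Complex.exp ((θ : ℂ) * Complex.I * (kendallS j : ℂ))
      = ∏ k ∈ Finset.Icc 1 ν,
          Complex.cos ((2 * (k : ℂ) - 1) * (θ : ℂ) / 2) ^ 2 := by
  let f : ℤ → ℂ := fun z => Complex.cos (z * θ / 2)
  have f_even : ∀ z, f (-z) = f z := fun z => by simp [f, neg_mul, neg_div, Complex.cos_neg]
  have phase : ∀ j : Fin (2 * ν) → Fin 2, (θ : ℂ) * Complex.I * (kendallS j : ℂ) =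
      Complex.I * ∑ i : Fin (2 * ν),
        (((2 * ν - 1 - 2 * (i : ℕ) : ℤ) : ℂ) * θ / 2) * (2 * (j i : ℕ) - 1) := by
    intro j
    have h := congrArg (Int.cast : ℤ → ℂ) (two_mul_kendallS_fin_two j)
    push_cast at h ⊢
    simp_rw [mul_div_assoc, mul_right_comm _ ((θ : ℂ) / 2), ← sum_mul, ← h]
    ring
  calc _ = ∑ j : Fin (2 * ν) → Fin 2, (1 / 2 ^ Fintype.card (Fin (2 * ν)) : ℂ) *
        Complex.exp (Complex.I * ∑ i : Fin (2 * ν),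
          (((2 * ν - 1 - 2 * (i : ℕ) : ℤ) : ℂ) * θ / 2) * (2 * (j i : ℕ) - 1)) := by
        simp only [phase, Fintype.card_fin]
    _ = ∏ i ∈ range (2 * ν), f (2 * ν - 1 - 2 * i) := by
        rw [sum_pi_fin_two_exp_eq_prod_cos, ← Fin.prod_univ_eq_prod_range]
    _ = _ := by
        rw [prod_range_odd_eq_prod_Icc_sq_of_even f f_even]
        push_cast [f]
        rfl
end

section
/- In the binary case \ell = 2 with i.i.d. fair coin flips, the variance of S equals n(n^2 - 1)/12. -/
open Finset

/-! For bits `x k`, put `ε k = (-1) ^ x k`. Since `[a < b] - [b < a] = b - a` on `{0, 1}`, the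
Kendall score is linear in the signs: `2 S = ∑ k, (2 k + 1 - n) ε k`. The signs are orthogonal
for the uniform measure, `∑ x, ε k * ε l = 2 ^ n [k = l]`, so `E S = 0` and
`Var S = (1 / 4) ∑ k, (2 k + 1 - n) ^ 2 = n (n ^ 2 - 1) / 12`. -/

section Signs

variable {ι R : Type*} [Fintype ι] [DecidableEq ι] [CommRing R]

lemma neg_one_pow_val_add_one (b : Fin 2) :
    (-1 : R) ^ ((b + 1 : Fin 2) : ℕ) = -(-1) ^ (b : ℕ) := by
  fin_cases b <;> simp

lemma sum_eq_zero_of_flip {f : (ι → Fin 2) → R} (k : ι)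
    (hf : ∀ x, f (x + Pi.single k 1) = -f x) : ∑ x, f x = 0 :=
  Finset.sum_ninvolution (· + Pi.single k 1) (fun x => by simp [hf])
    (fun x _ => by simp)
    (fun _ => Finset.mem_univ _)
    (fun x => by rw [add_assoc, ← Pi.single_add]; simp)

lemma sum_neg_one_pow_apply (k : ι) : ∑ x : ι → Fin 2, (-1 : R) ^ (x k : ℕ) = 0 :=
  sum_eq_zero_of_flip k fun x => by simp [neg_one_pow_val_add_one]

lemma sum_neg_one_pow_apply_mul (k l : ι) :
    ∑ x : ι → Fin 2, (-1 : R) ^ (x k : ℕ) * (-1) ^ (x l : ℕ) =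
      if k = l then 2 ^ Fintype.card ι else 0 := by
  split_ifs with hkl
  · subst hkl
    simp [← pow_add, ← two_mul, pow_mul]
  · exact sum_eq_zero_of_flip k fun x => by
      simp [neg_one_pow_val_add_one, Ne.symm hkl]

lemma sum_sum_mul_neg_one_pow (a : ι → R) :
    ∑ x : ι → Fin 2, ∑ k, a k * (-1) ^ (x k : ℕ) = 0 := by
  rw [Finset.sum_comm]
  simp [← Finset.mul_sum, sum_neg_one_pow_apply]

lemma sum_sq_sum_mul_neg_one_pow (a : ι → R) :
    ∑ x : ι → Fin 2, (∑ k, a k * (-1) ^ (x k : ℕ)) ^ 2 =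
      2 ^ Fintype.card ι * ∑ k, a k ^ 2 := by
  simp_rw [sq, Finset.sum_mul_sum, mul_mul_mul_comm]
  rw [Finset.sum_comm]
  simp_rw [Finset.sum_comm (γ := ι → Fin 2), ← Finset.mul_sum, sum_neg_one_pow_apply_mul]
  simp [Finset.mul_sum, mul_comm]

end Signs

section PairSums

variable {M : Type*} [AddCommMonoid M] {n : ℕ}

lemma sum_filter_lt_fst (f : Fin n → M) :
    ∑ p ∈ univ.filter (fun p : Fin n × Fin n => p.2 < p.1), f p.1 =
      ∑ i : Fin n, (i : ℕ) • f i := by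
  rw [Finset.sum_filter, Fintype.sum_prod_type]
  refine Finset.sum_congr rfl fun i _ => ?_
  dsimp only
  rw [← Finset.sum_filter, Finset.filter_gt_eq_Iio, Finset.sum_const, Fin.card_Iio]

lemma sum_filter_lt_snd (f : Fin n → M) :
    ∑ p ∈ univ.filter (fun p : Fin n × Fin n => p.2 < p.1), f p.2 =
      ∑ j : Fin n, (n - 1 - j : ℕ) • f j := by
  rw [Finset.sum_filter, Fintype.sum_prod_type, Finset.sum_comm]
  refine Finset.sum_congr rfl fun j _ => ?_
  dsimp only
  rw [← Finset.sum_filter, Finset.filter_lt_eq_Ioi, Finset.sum_const, Fin.card_Ioi]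

end PairSums

section KendallBinary

variable {R : Type*} [CommRing R] {n : ℕ}

lemma two_mul_kendallS_fin_two_s9 (x : Fin n → Fin 2) :
    2 * (kendallS x : R) = ∑ p ∈ univ.filter (fun p : Fin n × Fin n => p.2 < p.1),
      ((-1) ^ (x p.1 : ℕ) - (-1) ^ (x p.2 : ℕ)) := by
  rw [kendallS, ← Finset.filter_filter, ← Finset.filter_filter, Finset.card_filter,
    Finset.card_filter]
  push_cast
  rw [← Finset.sum_sub_distrib, Finset.mul_sum]
  refine Finset.sum_congr rfl fun p _ => ?_
  generalize x p.1 = a; generalize x p.2 = b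
  fin_cases a <;> fin_cases b <;> simp <;> ring

lemma two_mul_kendallS_fin_two_eq_sum_weight (x : Fin n → Fin 2) :
    2 * (kendallS x : R) = ∑ k : Fin n, (2 * (k : ℕ) + 1 - n : R) * (-1) ^ (x k : ℕ) := by
  rw [two_mul_kendallS_fin_two_s9, Finset.sum_sub_distrib,
    sum_filter_lt_fst (fun i => (-1 : R) ^ (x i : ℕ)),
    sum_filter_lt_snd (fun i => (-1 : R) ^ (x i : ℕ)),
    ← Finset.sum_sub_distrib]
  refine Finset.sum_congr rfl fun k _ => ?_
  have hk : n - 1 - k + k + 1 = n := by omega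
  have hk' := congrArg (Nat.cast (R := R)) hk
  push_cast at hk'
  simp only [nsmul_eq_mul]
  linear_combination -(-1 : R) ^ (x k : ℕ) * hk'

end KendallBinary

lemma sum_range_sq_two_mul_add_one_sub {R : Type*} [CommRing R] (n : ℕ) (m : R) :
    3 * ∑ i ∈ range n, (2 * i + 1 - m) ^ 2 =
      n * (4 * n ^ 2 - 1) - 6 * m * n ^ 2 + 3 * n * m ^ 2 := by
  induction n with
  | zero => simp
  | succ n ih =>
    rw [Finset.sum_range_succ, mul_add, ih]
    push_cast
    ring

/-- Binary uniform case: Var(S) = n(n²-1)/12. -/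
theorem kendall_variance_binary (n : ℕ) :
    (∑ x : Fin n → Fin 2, (kendallS x : ℚ) ^ 2) / 2 ^ n
      - ((∑ x : Fin n → Fin 2, (kendallS x : ℚ)) / 2 ^ n) ^ 2
    = (n : ℚ) * ((n : ℚ) ^ 2 - 1) / 12 := by
  set w : Fin n → ℚ := fun k => 2 * (k : ℕ) + 1 - n
  have hS (x : Fin n → Fin 2) : (kendallS x : ℚ) = (∑ k, w k * (-1) ^ (x k : ℕ)) / 2 := by
    rw [← two_mul_kendallS_fin_two_eq_sum_weight]
    ring
  have hw : 3 * ∑ k, w k ^ 2 = n * (n ^ 2 - 1) := by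
    rw [Fin.sum_univ_eq_sum_range (fun k => (2 * k + 1 - n : ℚ) ^ 2),
      sum_range_sq_two_mul_add_one_sub]
    ring
  simp_rw [hS, div_pow, ← Finset.sum_div, sum_sq_sum_mul_neg_one_pow, sum_sum_mul_neg_one_pow,
    Fintype.card_fin]
  rw [zero_div, zero_pow two_ne_zero, zero_div, sub_zero, div_right_comm,
    mul_div_cancel_left₀ _ (by positivity)]
  linear_combination hw / 12
end

section
/- In the binary case \ell = 2 with i.i.d. fair coin flips, \mu_4(n)/\sigma(n)^4 \to 3 as n \to \infty, where \sigma^2(n) = Var(S) and \mu_4(n) = E[S^4]. -/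
open Finset

/-!
For bits `x k` with signs `ε k = 2 x k - 1` the Kendall score is the Rademacher sum
`2 S = ∑ k, c k * ε k` with `c k = n - 1 - 2 k`, since every ordered pair `j < i` contributes
`(ε j - ε i) / 2`. Splitting off one coordinate at a time gives `E[(∑ c ε)²] = ∑ c²` and
`E[(∑ c ε)⁴] = 3 (∑ c²)² - 2 ∑ c⁴`, so the kurtosis of `S` is `3 - 2 ∑ c⁴ / (∑ c²)²`. As
`c k ² ≤ (n - 1)²` and `∑ c² = n (n² - 1) / 3`, the correction is at most `6 / n`.
-/

section RademacherSums

variable {R : Type*} [CommRing R] {n : ℕ}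

def rademacher (b : Fin 2) : R := 2 * ((b : ℕ) : R) - 1

@[simp] lemma rademacher_zero : rademacher (R := R) 0 = -1 := by simp [rademacher]

@[simp] lemma rademacher_one : rademacher (R := R) 1 = 1 := by norm_num [rademacher]

def rademacherSum (c : Fin n → R) (x : Fin n → Fin 2) : R := ∑ k, c k * rademacher (x k)

lemma rademacherSum_cons (c : Fin (n + 1) → R) (b : Fin 2) (y : Fin n → Fin 2) :
    rademacherSum c (Fin.cons b y) = c 0 * rademacher b + rademacherSum (Fin.tail c) y := by
  simp [rademacherSum, Fin.sum_univ_succ, Fin.tail]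

lemma sum_fun_fin_succ {β M : Type*} [Fintype β] [AddCommMonoid M]
    (f : (Fin (n + 1) → β) → M) :
    ∑ x, f x = ∑ b, ∑ y : Fin n → β, f (Fin.cons b y) := by
  rw [← (Fin.consEquiv fun _ => β).sum_comp, Fintype.sum_prod_type]
  rfl

lemma sum_rademacherSum (c : Fin n → R) : ∑ x, rademacherSum c x = 0 := by
  induction n with
  | zero => simp [rademacherSum]
  | succ n ih =>
    have h (a s : R) : (a * -1 + s) + (a * 1 + s) = 2 * s := by ring
    simp only [sum_fun_fin_succ, Fin.sum_univ_two, ← sum_add_distrib, rademacherSum_cons,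
      rademacher_zero, rademacher_one, h]
    rw [← mul_sum, ih, mul_zero]

lemma sum_rademacherSum_sq (c : Fin n → R) :
    ∑ x, rademacherSum c x ^ 2 = 2 ^ n * ∑ k, c k ^ 2 := by
  induction n with
  | zero => simp [rademacherSum]
  | succ n ih =>
    have h (a s : R) : (a * -1 + s) ^ 2 + (a * 1 + s) ^ 2 = 2 * s ^ 2 + 2 * a ^ 2 := by ring
    simp only [sum_fun_fin_succ, Fin.sum_univ_two, ← sum_add_distrib, rademacherSum_cons,
      rademacher_zero, rademacher_one, h]
    rw [sum_add_distrib, ← mul_sum, ih, Fin.sum_univ_succ]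
    simp only [Fin.tail, sum_const, card_univ, Fintype.card_fun, Fintype.card_fin, nsmul_eq_mul]
    push_cast
    ring

lemma sum_rademacherSum_pow_four (c : Fin n → R) :
    ∑ x, rademacherSum c x ^ 4 = 2 ^ n * (3 * (∑ k, c k ^ 2) ^ 2 - 2 * ∑ k, c k ^ 4) := by
  induction n with
  | zero => simp [rademacherSum]
  | succ n ih =>
    have h (a s : R) : (a * -1 + s) ^ 4 + (a * 1 + s) ^ 4
        = 2 * s ^ 4 + 12 * a ^ 2 * s ^ 2 + 2 * a ^ 4 := by ring
    simp only [sum_fun_fin_succ, Fin.sum_univ_two, ← sum_add_distrib, rademacherSum_cons,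
      rademacher_zero, rademacher_one, h]
    rw [sum_add_distrib, sum_add_distrib, ← mul_sum, ih, ← mul_sum, sum_rademacherSum_sq,
      Fin.sum_univ_succ, Fin.sum_univ_succ (fun k => c k ^ 4)]
    simp only [Fin.tail, sum_const, card_univ, Fintype.card_fun, Fintype.card_fin, nsmul_eq_mul]
    push_cast
    ring

end RademacherSums

lemma sum_sum_ite_lt_sub {R : Type*} [CommRing R] {n : ℕ} (f : Fin n → R) :
    ∑ i, ∑ j, (if j < i then f j - f i else 0)
      = ∑ k : Fin n, ((n : R) - 1 - 2 * (k : ℕ)) * f k := by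
  have hlt (i : Fin n) (a : R) : ∑ j, (if j < i then a else 0) = (i : ℕ) * a := by
    rw [← sum_filter, filter_gt_eq_Iio, sum_const, Fin.card_Iio, nsmul_eq_mul]
  have hgt (j : Fin n) (a : R) :
      ∑ i, (if j < i then a else 0) = ((n : R) - 1 - (j : ℕ)) * a := by
    have := j.isLt
    rw [← sum_filter, filter_lt_eq_Ioi, sum_const, Fin.card_Ioi, nsmul_eq_mul, Nat.sub_sub,
      Nat.cast_sub (by omega)]
    push_cast; ring
  have hsplit (i j : Fin n) : (if j < i then f j - f i else 0)
      = (if j < i then f j else 0) - (if j < i then f i else 0) := by rw [ite_sub_ite, sub_zero]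
  simp only [hsplit, sum_sub_distrib, hlt]
  rw [sum_comm]
  simp only [hgt, ← sum_sub_distrib]
  exact sum_congr rfl fun k _ => by ring

lemma kendallS_fin_two_eq_sum_sub {n : ℕ} (x : Fin n → Fin 2) :
    kendallS x = ∑ i, ∑ j, (if j < i then (x j : ℤ) - x i else 0) := by
  rw [kendallS, card_filter, card_filter, ← Fintype.sum_prod_type']
  push_cast
  rw [← sum_sub_distrib]
  refine sum_congr rfl fun p _ => ?_
  by_cases h : p.2 < p.1
  · have := (x p.1).isLt
    have := (x p.2).isLt
    simp only [h, true_and, Fin.lt_def]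
    split_ifs <;> omega
  · simp [h]

def kendallCoeff (n : ℕ) (k : Fin n) : ℝ := n - 1 - 2 * (k : ℕ)

lemma kendallS_eq_rademacherSum {n : ℕ} (x : Fin n → Fin 2) :
    (kendallS x : ℝ) = rademacherSum (kendallCoeff n) x / 2 := by
  have hx (b : Fin 2) : ((b : ℕ) : ℝ) = (rademacher b + 1) / 2 := by
    rw [rademacher]; ring
  rw [kendallS_fin_two_eq_sum_sub, rademacherSum]
  unfold kendallCoeff
  push_cast
  simp only [hx, ← sum_sum_ite_lt_sub (fun k => rademacher (R := ℝ) (x k)), sum_div]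
  refine sum_congr rfl fun i _ => sum_congr rfl fun j _ => ?_
  split_ifs <;> ring

lemma sum_range_cast_mul_two {R : Type*} [CommRing R] (n : ℕ) :
    (∑ k ∈ range n, (k : R)) * 2 = n * (n - 1) := by
  induction n with
  | zero => simp
  | succ n ih => rw [sum_range_succ, add_mul, ih]; push_cast; ring

lemma sum_range_cast_sq_mul_six {R : Type*} [CommRing R] (n : ℕ) :
    (∑ k ∈ range n, (k : R) ^ 2) * 6 = n * (n - 1) * (2 * n - 1) := by
  induction n with
  | zero => simp
  | succ n ih => rw [sum_range_succ, add_mul, ih]; push_cast; ring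

lemma sum_kendallCoeff_sq (n : ℕ) : ∑ k, kendallCoeff n k ^ 2 = n * (n ^ 2 - 1) / 3 := by
  have hexp (k : ℕ) :
      ((n : ℝ) - 1 - 2 * k) ^ 2 = (n - 1) ^ 2 - 4 * (n - 1) * k + 4 * (k : ℝ) ^ 2 := by ring
  unfold kendallCoeff
  rw [Fin.sum_univ_eq_sum_range (fun k => ((n : ℝ) - 1 - 2 * k) ^ 2)]
  simp only [hexp, sum_add_distrib, sum_sub_distrib, sum_const, card_range, ← mul_sum,
    nsmul_eq_mul]
  linear_combination (-2 * ((n : ℝ) - 1)) * sum_range_cast_mul_two (R := ℝ) n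
    + (2 / 3 : ℝ) * sum_range_cast_sq_mul_six (R := ℝ) n

lemma sum_kendallCoeff_sq_pos {n : ℕ} (hn : 2 ≤ n) : 0 < ∑ k, kendallCoeff n k ^ 2 := by
  have : (2 : ℝ) ≤ n := by exact_mod_cast hn
  rw [sum_kendallCoeff_sq]
  nlinarith

lemma sum_kendallCoeff_pow_four_le (n : ℕ) :
    ∑ k, kendallCoeff n k ^ 4 ≤ ((n : ℝ) - 1) ^ 2 * ∑ k, kendallCoeff n k ^ 2 := by
  rw [mul_sum]
  refine sum_le_sum fun k _ => ?_
  have hk : ((k : ℕ) : ℝ) + 1 ≤ n := by exact_mod_cast k.isLt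
  have hsq : kendallCoeff n k ^ 2 ≤ ((n : ℝ) - 1) ^ 2 :=
    sq_le_sq' (by unfold kendallCoeff; linarith) (by unfold kendallCoeff; linarith)
  calc kendallCoeff n k ^ 4 = kendallCoeff n k ^ 2 * kendallCoeff n k ^ 2 := by ring
    _ ≤ ((n : ℝ) - 1) ^ 2 * kendallCoeff n k ^ 2 := by gcongr

open Filter Topology in
lemma tendsto_sum_kendallCoeff_pow_four_div_sq :
    Tendsto (fun n => (∑ k, kendallCoeff n k ^ 4) / (∑ k, kendallCoeff n k ^ 2) ^ 2)
      atTop (𝓝 0) := by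
  refine squeeze_zero' (Eventually.of_forall fun n => by positivity) ?_
    (tendsto_const_div_atTop_nhds_zero_nat 3)
  filter_upwards [eventually_ge_atTop 2] with n hn
  have hs := sum_kendallCoeff_sq_pos hn
  have : (2 : ℝ) ≤ n := by exact_mod_cast hn
  calc (∑ k, kendallCoeff n k ^ 4) / (∑ k, kendallCoeff n k ^ 2) ^ 2
      ≤ ((n : ℝ) - 1) ^ 2 / ∑ k, kendallCoeff n k ^ 2 := by
        rw [div_le_div_iff₀ (by positivity) hs]
        nlinarith [sum_kendallCoeff_pow_four_le n]
    _ = 3 * ((n : ℝ) - 1) / (n * (n + 1)) := by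
        have : (n : ℝ) ^ 2 - 1 ≠ 0 := by nlinarith
        rw [sum_kendallCoeff_sq]; field_simp; ring
    _ ≤ 3 / n := by
        rw [div_le_div_iff₀ (by positivity) (by positivity)]; nlinarith

lemma sum_kendallS (n : ℕ) : ∑ x : Fin n → Fin 2, (kendallS x : ℝ) = 0 := by
  simp only [kendallS_eq_rademacherSum, ← sum_div, sum_rademacherSum, zero_div]

lemma sum_kendallS_sq (n : ℕ) :
    ∑ x : Fin n → Fin 2, (kendallS x : ℝ) ^ 2
      = 2 ^ n * (∑ k, kendallCoeff n k ^ 2) / 4 := by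
  simp only [kendallS_eq_rademacherSum, div_pow, ← sum_div, sum_rademacherSum_sq]
  norm_num

lemma sum_kendallS_pow_four (n : ℕ) :
    ∑ x : Fin n → Fin 2, (kendallS x : ℝ) ^ 4
      = 2 ^ n * (3 * (∑ k, kendallCoeff n k ^ 2) ^ 2 - 2 * ∑ k, kendallCoeff n k ^ 4) / 16 := by
  simp only [kendallS_eq_rademacherSum, div_pow, ← sum_div, sum_rademacherSum_pow_four]
  norm_num

/-- Binary uniform case: μ₄(n)/σ(n)⁴ → 3 as n → ∞, with σ²(n) = Var(S), μ₄(n) = E[S⁴]. -/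
theorem kendall_kurtosis_limit :
    Filter.Tendsto (fun n : ℕ =>
      ((∑ x : Fin n → Fin 2, (kendallS x : ℝ) ^ 4) / 2 ^ n) /
        ((∑ x : Fin n → Fin 2, (kendallS x : ℝ) ^ 2) / 2 ^ n
          - ((∑ x : Fin n → Fin 2, (kendallS x : ℝ)) / 2 ^ n) ^ 2) ^ 2)
      Filter.atTop (nhds 3) := by
  have hlim := (tendsto_sum_kendallCoeff_pow_four_div_sq.const_mul 2).const_sub (3 : ℝ)
  rw [mul_zero, sub_zero] at hlim
  refine hlim.congr' ?_
  filter_upwards [Filter.eventually_ge_atTop 2] with n hn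
  have hs := sum_kendallCoeff_sq_pos hn
  rw [sum_kendallS, sum_kendallS_sq, sum_kendallS_pow_four]
  field_simp
  ring
end

section
/- The counts P_n(t; j_0,...,j_{\ell-1}) of sequences of length n with j_r occurrences of digit r and Kendall score t satisfy the recursion P_{n+1}(t; i_0,...,i_{\ell-1}) = \sum_{k=0}^{\ell-1} P_n(t + i_0 + ... + i_{k-1} - i_{k+1} - ... - i_{\ell-1}; i_0,...,i_k - 1,...,i_{\ell-1}), where i_0 + ... + i_{\ell-1} = n+1. -/
/-!
Split the sequences of length `n + 1` according to their last entry `k`. Removing it leaves a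
sequence of length `n` with digit counts `i` except that `i k` drops by one, and the last entry
forms a pair with each earlier entry: a `+` pair with each of the `∑_{r > k} i r` larger ones
and a `-` pair with each of the `∑_{r < k} i r` smaller ones, which shifts the score by exactly
the difference of these sums.
-/

open Finset

/-- P n t j: the number of sequences of length n with exactly j r occurrences of each digit r
and Kendall score t. -/
def kendallCount (ℓ n : ℕ) (t : ℤ) (j : Fin ℓ → ℕ) : ℕ :=
  (Finset.univ.filter (fun x : Fin n → Fin ℓ =>
    kendallS x = t ∧ ∀ r, (Finset.univ.filter (fun k => x k = r)).card = j r)).card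

section Snoc

variable {α : Type*} {n : ℕ}

theorem card_filter_eq_sum_card_filter_snoc [Fintype α] (p : (Fin (n + 1) → α) → Prop)
    [DecidablePred p] : #{x | p x} = ∑ a, #{y : Fin n → α | p (Fin.snoc y a)} := by
  simp only [card_filter]
  rw [← (Fin.snocEquiv fun _ => α).sum_comp, Fintype.sum_prod_type]
  rfl

theorem card_filter_pairs_snoc (y : Fin n → α) (a : α) (R : α → α → Prop) [DecidableRel R] :
    #{p : Fin (n + 1) × Fin (n + 1) |
        p.2 < p.1 ∧ R ((Fin.snoc y a : Fin (n + 1) → α) p.1) ((Fin.snoc y a : Fin (n + 1) → α) p.2)}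
      = #{p : Fin n × Fin n | p.2 < p.1 ∧ R (y p.1) (y p.2)} + #{j | R a (y j)} := by
  have : ∀ j : Fin n, ¬ Fin.last n < Fin.castSucc j := fun j => not_lt.2 (Fin.le_last _)
  simp only [card_filter, Fintype.sum_prod_type, Fin.sum_univ_castSucc, Fin.snoc_castSucc,
    Fin.snoc_last, Fin.castSucc_lt_castSucc_iff, Fin.castSucc_lt_last, lt_irrefl, true_and,
    false_and, if_false, this, add_zero]

end Snoc

section DigitCount

variable {α : Type*} [DecidableEq α] {n : ℕ}

def digitCount (x : Fin n → α) (r : α) : ℕ := #{j | x j = r}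

theorem digitCount_snoc (y : Fin n → α) (a r : α) :
    digitCount (Fin.snoc y a : Fin (n + 1) → α) r = digitCount y r + if a = r then 1 else 0 := by
  simp only [digitCount, card_filter, Fin.sum_univ_castSucc, Fin.snoc_castSucc, Fin.snoc_last]

theorem sum_digitCount [Fintype α] (y : Fin n → α) : ∑ r, digitCount y r = n := by
  simp [digitCount, sum_card_fiberwise_eq_card_filter]

theorem digitCount_snoc_eq_iff [Fintype α] (y : Fin n → α) (a : α) {i : α → ℕ}
    (hi : ∑ r, i r = n + 1) :
    digitCount (Fin.snoc y a : Fin (n + 1) → α) = i ↔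
      digitCount y = Function.update i a (i a - 1) := by
  constructor
  · rintro rfl
    funext r
    rcases eq_or_ne r a with rfl | hr
    · simp [digitCount_snoc]
    · simp [digitCount_snoc, hr, hr.symm]
  · intro hy
    -- for `i a = 0` the update is `i` itself, whose total `n + 1` exceeds the length of `y`
    have ha : i a ≠ 0 := by
      intro ha
      have := sum_digitCount y
      rw [hy, ha, zero_tsub, ← ha, Function.update_eq_self, hi] at this
      omega
    funext r
    rw [digitCount_snoc, hy]
    rcases eq_or_ne r a with rfl | hr
    · simp only [Function.update_self, if_true]
      omega
    · simp [hr, hr.symm]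

end DigitCount

section KendallScore

variable {α : Type*} [LinearOrder α] {n : ℕ}

theorem kendallS_snoc (y : Fin n → α) (a : α) :
    kendallS (Fin.snoc y a : Fin (n + 1) → α) = kendallS y + #{j | a < y j} - #{j | y j < a} := by
  rw [kendallS, kendallS, card_filter_pairs_snoc y a (· < ·),
    card_filter_pairs_snoc y a (fun b c => c < b)]
  push_cast
  ring

theorem kendallS_snoc_eq_sum_digitCount [Fintype α] (y : Fin n → α) (a : α) :
    kendallS (Fin.snoc y a : Fin (n + 1) → α) = kendallS y
      + ∑ r ∈ univ.filter (a < ·), (digitCount y r : ℤ)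
      - ∑ r ∈ univ.filter (· < a), (digitCount y r : ℤ) := by
  simp only [digitCount, ← Nat.cast_sum, sum_card_fiberwise_eq_card_filter, mem_filter, mem_univ,
    true_and, kendallS_snoc]

end KendallScore

theorem kendallCount_eq_card (ℓ n : ℕ) (t : ℤ) (j : Fin ℓ → ℕ) :
    kendallCount ℓ n t j = #{x : Fin n → Fin ℓ | kendallS x = t ∧ digitCount x = j} := by
  simp only [kendallCount, digitCount, funext_iff]

/-- The fundamental recursion for the counts P: terms with i k - 1 < 0 are zero
(here via truncated subtraction, the digit counts then fail to sum to n). -/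
theorem kendallCount_recursion (ℓ n : ℕ) (i : Fin ℓ → ℕ) (t : ℤ)
    (h : ∑ r, i r = n + 1) :
    kendallCount ℓ (n + 1) t i
      = ∑ k : Fin ℓ,
          kendallCount ℓ n
            (t + ∑ r ∈ Finset.univ.filter (fun r => r < k), (i r : ℤ)
               - ∑ r ∈ Finset.univ.filter (fun r => k < r), (i r : ℤ))
            (Function.update i k (i k - 1)) := by
  rw [kendallCount_eq_card, card_filter_eq_sum_card_filter_snoc]
  refine sum_congr rfl fun k _ => ?_
  rw [kendallCount_eq_card]
  refine congrArg card (filter_congr fun y _ => ?_)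
  rw [digitCount_snoc_eq_iff y k h]
  refine and_congr_left fun hy => ?_
  have h_gt : ∑ r ∈ univ.filter (k < ·), (digitCount y r : ℤ) =
      ∑ r ∈ univ.filter (k < ·), (i r : ℤ) :=
    sum_congr rfl fun r hr => by rw [hy, Function.update_of_ne (mem_filter.1 hr).2.ne']
  have h_lt : ∑ r ∈ univ.filter (· < k), (digitCount y r : ℤ) =
      ∑ r ∈ univ.filter (· < k), (i r : ℤ) :=
    sum_congr rfl fun r hr => by rw [hy, Function.update_of_ne (mem_filter.1 hr).2.ne]
  rw [kendallS_snoc_eq_sum_digitCount, h_gt, h_lt]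
  constructor <;> intro <;> linarith
end
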